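/- A Set functor F has a diagonal-preserving lax extension if and only if the identity relational connector id_F preserves diagonals, i.e., id_F Δ_X ⊆ Δ_{FX} for all sets X. -/

import Mathlib

/-!
A lax extension `L` of `F` is automatically natural, hence a relational connector, and it
contains the diagonal of `F`. Instantiating the definition of `id_F` at `L` itself with
`s = Δ` then gives `id_F ≤ L`. Since `id_F` is itself a lax extension, it is the least one,
so some lax extension preserves diagonals iff `id_F` does.
-/

open CategoryTheory

universe u

/-- A `Set` functor: a functor from the category of sets (types) to itself. -/
abbrev SetFunctor : Type (u + 1) := CategoryTheory.Functor (Type u) (Type u)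

/-- Applicative-order composition of relations: `(rcomp s r) x z ↔ ∃ y, r x y ∧ s y z`,
i.e. `s · r` in the notation of the paper. -/
def rcomp {X Y Z : Type u} (s : Y → Z → Prop) (r : X → Y → Prop) : X → Z → Prop :=
  fun x z => ∃ y, r x y ∧ s y z

/-- Relational converse `r°`. -/
def rconv {X Y : Type u} (r : X → Y → Prop) : Y → X → Prop := fun y x => r x y

/-- The graph of a function, identifying functions with relations. -/
def graph {X Y : Type u} (f : X → Y) : X → Y → Prop := fun x y => f x = y

/-- The diagonal relation `Δ_X`. -/
def diag (X : Type u) : X → X → Prop := fun x y => x = y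

/-- Relational image `r[A]`. -/
def rimage {X Y : Type u} (r : X → Y → Prop) (A : Set X) : Set Y :=
  {y | ∃ x ∈ A, r x y}

/-- The pointwise product of two `Set` functors. -/
def prodFunctor (F₁ F₂ : SetFunctor.{u}) : SetFunctor.{u} where
  obj X := F₁.obj X × F₂.obj X
  map f := TypeCat.ofHom fun p => (F₁.map f p.1, F₂.map f p.2)
  map_id X := by ext p <;> simp
  map_comp f g := by ext p <;> simp

/-- An assignment of relations `F X ⇸ G Y` to relations `X ⇸ Y`; a relational connector
is such an assignment satisfying monotonicity and naturality (`RelConn.IsConnector`). -/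
structure RelConn (F G : SetFunctor.{u}) : Type (u + 1) where
  rel : ∀ {X Y : Type u}, (X → Y → Prop) → F.obj X → G.obj Y → Prop

namespace RelConn

variable {F G H V : SetFunctor.{u}}

/-- Monotonicity: `r₁ ⊆ r₂` implies `L r₁ ⊆ L r₂`. -/
def Mono (L : RelConn F G) : Prop :=
  ∀ (X Y : Type u) (r₁ r₂ : X → Y → Prop), (∀ x y, r₁ x y → r₂ x y) →
    ∀ a b, L.rel r₁ a b → L.rel r₂ a b

/-- Naturality: `L(g° · r · f) = (G g)° · L r · F f`. -/
def Natural (L : RelConn F G) : Prop :=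
  ∀ (X X' Y Y' : Type u) (f : X' → X) (g : Y' → Y) (r : X → Y → Prop),
    L.rel (rcomp (rconv (graph g)) (rcomp r (graph f))) =
      rcomp (rconv (graph (G.map (TypeCat.ofHom g)))) (rcomp (L.rel r) (graph (F.map (TypeCat.ofHom f))))

/-- A relational connector: a monotone and natural assignment of relations. -/
def IsConnector (L : RelConn F G) : Prop := L.Mono ∧ L.Natural

/-- The pointwise order on connectors: `L ≤ K` iff `L r ⊆ K r` for all `r`. -/
def le (L K : RelConn F G) : Prop :=
  ∀ (X Y : Type u) (r : X → Y → Prop) (a : F.obj X) (b : G.obj Y), L.rel r a b → K.rel r a b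

/-- The composite `L · K` of relational connectors:
`(L · K) r = ⋃ { L s · K t | s · t = r }`, the join over all factorizations of `r`
through an arbitrary intermediate set `Y`. -/
def comp (L : RelConn G H) (K : RelConn F G) : RelConn F H where
  rel := fun {X Z} r a c => ∃ (Y : Type u) (t : X → Y → Prop) (s : Y → Z → Prop),
    rcomp s t = r ∧ ∃ b, K.rel t a b ∧ L.rel s b c

/-- The converse `L°` of a connector: `L° r = (L (r°))°`. -/
def conv (L : RelConn F G) : RelConn G F where
  rel := fun {X Y} r b a => L.rel (rconv r) a b

/-- The meet (pointwise intersection) of two connectors. -/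
def meet (L K : RelConn F G) : RelConn F G where
  rel := fun {X Y} r a b => L.rel r a b ∧ K.rel r a b

/-- The product `L₁ × L₂` of connectors. -/
def prod {F₁ F₂ G₁ G₂ : SetFunctor.{u}} (L₁ : RelConn F₁ G₁) (L₂ : RelConn F₂ G₂) :
    RelConn (prodFunctor F₁ F₂) (prodFunctor G₁ G₂) where
  rel := fun {X Y} r p q => L₁.rel r p.1 q.1 ∧ L₂.rel r p.2 q.2

/-- The identity relational connector `id_F`: `b (id_F r) c` iff for all set functors `G`,
all relational connectors `L : G → F`, all `s : Z ⇸ X` and `a ∈ G Z`,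
`a (L s) b` implies `a (L (r · s)) c`. -/
def id (F : SetFunctor.{u}) : RelConn F F where
  rel := fun {X Y} r b c =>
    ∀ (G : SetFunctor.{u}) (L : RelConn G F), L.IsConnector →
      ∀ (Z : Type u) (s : Z → X → Prop) (a : G.obj Z),
        L.rel s a b → L.rel (rcomp r s) a c

/-- A connector `L : F → F` is transitive if `L · L ≤ L`. -/
def Transitive (L : RelConn F F) : Prop := (L.comp L).le L

/-- A connector `L : F → F` is symmetric if `L° ≤ L`. -/
def Symmetric (L : RelConn F F) : Prop := L.conv.le L

/-- A connector `L : F → F` extends `F` if `Δ_{F X} ⊆ L Δ_X` for all `X`. -/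
def ExtendsF (L : RelConn F F) : Prop :=
  ∀ (X : Type u) (a b : F.obj X), diag (F.obj X) a b → L.rel (diag X) a b

/-- Condition (L2) of lax extensions: `L s · L r ⊆ L (s · r)`. -/
def LaxL2 (L : RelConn F F) : Prop :=
  ∀ (X Y Z : Type u) (r : X → Y → Prop) (s : Y → Z → Prop) (a : F.obj X) (c : F.obj Z),
    rcomp (L.rel s) (L.rel r) a c → L.rel (rcomp s r) a c

/-- Condition (L3) of lax extensions: `F f ⊆ L f` and `(F f)° ⊆ L (f°)`. -/
def LaxL3 (L : RelConn F F) : Prop :=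
  ∀ (X Y : Type u) (f : X → Y),
    (∀ a b, graph (F.map (TypeCat.ofHom f)) a b → L.rel (graph f) a b) ∧
    (∀ b a, rconv (graph (F.map (TypeCat.ofHom f))) b a → L.rel (rconv (graph f)) b a)

/-- A lax extension of `F`: an assignment of relations satisfying (L1) monotonicity,
(L2) and (L3). -/
def IsLaxExtension (L : RelConn F F) : Prop := L.Mono ∧ L.LaxL2 ∧ L.LaxL3

/-- A connector `L : F → G` extends a natural transformation `α : F ⇒ G` if the graph of
`α_X` is contained in `L Δ_X` for all sets `X`. -/
def Extends (L : RelConn F G) (α : F ⟶ G) : Prop :=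
  ∀ (X : Type u) (a : F.obj X) (b : G.obj X), graph (α.app X) a b → L.rel (diag X) a b

end RelConn

/-- The connector `id_G • α` obtained from a natural transformation `α : F ⇒ G`:
`(id_G • α) r = (id_G r) · α_X`. -/
def idBullet {F G : SetFunctor.{u}} (α : F ⟶ G) : RelConn F G where
  rel := fun {X Y} r => rcomp ((RelConn.id G).rel r) (graph (α.app X))

/-- The intermediate set of the couniversal factorization of `r : X ⇸ Z`:
`{(A,B) ∈ P(X) × P(Z) | A × B ⊆ r}`. -/
def CoInt {X Z : Type u} (r : X → Z → Prop) : Type u :=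
  {p : Set X × Set Z // ∀ x ∈ p.1, ∀ z ∈ p.2, r x z}

/-- The first leg `t = {(x,(A,B)) | x ∈ A}` of the couniversal factorization. -/
def coT {X Z : Type u} (r : X → Z → Prop) : X → CoInt r → Prop := fun x p => x ∈ p.1.1

/-- The second leg `s = {((A,B),z) | z ∈ B}` of the couniversal factorization. -/
def coS {X Z : Type u} (r : X → Z → Prop) : CoInt r → Z → Prop := fun p z => z ∈ p.1.2

/-- `f : (C,γ) → (D,δ)` is a morphism of `F`-coalgebras: `F f ∘ γ = δ ∘ f`. -/
def IsCoalgMor {F : SetFunctor.{u}} {C D : Type u} (γ : C → F.obj C) (δ : D → F.obj D)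
    (f : C → D) : Prop := ∀ x, F.map (TypeCat.ofHom f) (γ x) = δ (f x)

/-- `r : C ⇸ D` is an `L`-simulation between the `F`-coalgebra `(C,γ)` and the
`G`-coalgebra `(D,δ)`: `x r y` implies `γ x (L r) δ y`. -/
def IsSim {F G : SetFunctor.{u}} (L : RelConn F G) {C D : Type u}
    (γ : C → F.obj C) (δ : D → G.obj D) (r : C → D → Prop) : Prop :=
  ∀ x y, r x y → L.rel r (γ x) (δ y)

/-- `L`-similarity: `x ≼_L y` iff some `L`-simulation relates `x` to `y`. -/
def Similar' {F G : SetFunctor.{u}} (L : RelConn F G) {C D : Type u}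
    (γ : C → F.obj C) (δ : D → G.obj D) : C → D → Prop :=
  fun x y => ∃ r, IsSim L γ δ r ∧ r x y

/-- `r : C ⇸ D` is an `L`-bisimulation (for `L : F → F`): both `r` and `r°`
are `L`-simulations. -/
def IsBisim {F : SetFunctor.{u}} (L : RelConn F F) {C D : Type u}
    (γ : C → F.obj C) (δ : D → F.obj D) (r : C → D → Prop) : Prop :=
  IsSim L γ δ r ∧ IsSim L δ γ (rconv r)

/-- `L`-bisimilarity: `x ≃_L y` iff some `L`-bisimulation relates `x` to `y`. -/
def Bisimilar {F : SetFunctor.{u}} (L : RelConn F F) {C D : Type u}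
    (γ : C → F.obj C) (δ : D → F.obj D) : C → D → Prop :=
  fun x y => ∃ r, IsBisim L γ δ r ∧ r x y

/-- Heterogeneous `L`-bisimulation for `L : F → G`: `r` is an `L`-simulation and `r°`
is an `L°`-simulation. -/
def IsBisimHet {F G : SetFunctor.{u}} (L : RelConn F G) {C D : Type u}
    (γ : C → F.obj C) (δ : D → G.obj D) (r : C → D → Prop) : Prop :=
  IsSim L γ δ r ∧ IsSim L.conv δ γ (rconv r)

/-- Heterogeneous `L`-bisimilarity for `L : F → G`. -/
def BisimilarHet {F G : SetFunctor.{u}} (L : RelConn F G) {C D : Type u}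
    (γ : C → F.obj C) (δ : D → G.obj D) : C → D → Prop :=
  fun x y => ∃ r, IsBisimHet L γ δ r ∧ r x y

/-- An `n`-ary predicate lifting for a `Set` functor `F`: a natural transformation
`(2^(-))ⁿ ⇒ 2^(F -)` with the contravariant powerset functor. -/
structure PredLifting (F : SetFunctor.{u}) (n : ℕ) : Type (u + 1) where
  app : ∀ (X : Type u), (Fin n → Set X) → Set (F.obj X)
  natural : ∀ (X Y : Type u) (f : X → Y) (A : Fin n → Set Y) (a : F.obj X),
    F.map (TypeCat.ofHom f) a ∈ app Y A ↔ a ∈ app X (fun i => f ⁻¹' (A i))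

/-- Monotonicity of a predicate lifting. -/
def PredLifting.IsMonotone {F : SetFunctor.{u}} {n : ℕ} (lam : PredLifting F n) : Prop :=
  ∀ (X : Type u) (A B : Fin n → Set X), (∀ i, A i ⊆ B i) → lam.app X A ⊆ lam.app X B

/-- The dual predicate lifting `λ̄_X(A₁,…,Aₙ) = F X \ λ_X(X\A₁,…,X\Aₙ)`. -/
def PredLifting.dual {F : SetFunctor.{u}} {n : ℕ} (lam : PredLifting F n) :
    PredLifting F n where
  app X A := (lam.app X fun i => (A i)ᶜ)ᶜ
  natural := by
    intro X Y f A a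
    simp only [Set.mem_compl_iff, lam.natural, Set.preimage_compl]

/-- The Kantorovich connector `L_Λ` induced by an arity-preserving relation `Λ` between
monotone predicate liftings of `F` and of `G`: `a (L_Λ r) b` iff for every `n`-ary pair
`(λ,μ) ∈ Λ` and all `A₁,…,Aₙ ⊆ X`, `a ∈ λ_X(A₁,…,Aₙ)` implies `b ∈ μ_Y(r[A₁],…,r[Aₙ])`. -/
def kantorovich {F G : SetFunctor.{u}}
    (Λ : ∀ n : ℕ, PredLifting F n → PredLifting G n → Prop) : RelConn F G where
  rel := fun {X Y} r a b =>
    ∀ (n : ℕ) (lam : PredLifting F n) (mu : PredLifting G n), Λ n lam mu →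
      ∀ A : Fin n → Set X, a ∈ lam.app X A → b ∈ mu.app Y (fun i => rimage r (A i))

lemma rcomp_assoc {X Y Z W : Type u} (t : Z → W → Prop) (s : Y → Z → Prop)
    (r : X → Y → Prop) : rcomp t (rcomp s r) = rcomp (rcomp t s) r := by
  funext x w
  exact propext ⟨fun ⟨z, ⟨y, hr, hs⟩, ht⟩ => ⟨y, hr, z, hs, ht⟩,
    fun ⟨y, hr, z, hs, ht⟩ => ⟨z, ⟨y, hr, hs⟩, ht⟩⟩

@[simp]
lemma rcomp_diag {X Y : Type u} (r : X → Y → Prop) : rcomp r (diag X) = r := by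
  funext x y
  exact propext ⟨fun ⟨_, hx, hr⟩ => hx ▸ hr, fun hr => ⟨x, rfl, hr⟩⟩

@[simp]
lemma SetFunctor.map_ofHom_id_apply (F : SetFunctor.{u}) {X : Type u} (a : F.obj X) :
    F.map (TypeCat.ofHom fun x : X => x) a = a :=
  F.map_id_apply X a

namespace RelConn

variable {F G : SetFunctor.{u}}

lemma Natural.rel_rcomp_rconv_graph {L : RelConn F G} (hL : L.Natural) {X Y Y' : Type u}
    (g : Y' → Y) (r : X → Y → Prop) (a : F.obj X) (c : G.obj Y') :
    L.rel (rcomp (rconv (graph g)) r) a c ↔ L.rel r a (G.map (TypeCat.ofHom g) c) := by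
  have h := congrFun (congrFun (hL X X Y Y' (fun x => x) g r) a) c
  rw [show rcomp r (graph fun x : X => x) = r from rcomp_diag r] at h
  rw [h]
  refine ⟨?_, fun hr => ⟨_, ⟨a, F.map_ofHom_id_apply a, hr⟩, rfl⟩⟩
  rintro ⟨_, ⟨_, ha, hr⟩, rfl⟩
  rw [graph, F.map_ofHom_id_apply] at ha
  exact ha ▸ hr

section LaxExtension

variable {L : RelConn F F}

lemma IsLaxExtension.rel_graph (hL : L.IsLaxExtension) {X Y : Type u} (f : X → Y)
    (a : F.obj X) : L.rel (graph f) a (F.map (TypeCat.ofHom f) a) :=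
  (hL.2.2 X Y f).1 a _ rfl

lemma IsLaxExtension.rel_rconv_graph (hL : L.IsLaxExtension) {X Y : Type u} (f : X → Y)
    (a : F.obj X) : L.rel (rconv (graph f)) (F.map (TypeCat.ofHom f) a) a :=
  (hL.2.2 X Y f).2 _ a rfl

lemma IsLaxExtension.rel_rcomp (hL : L.IsLaxExtension) {X Y Z : Type u} {r : X → Y → Prop}
    {s : Y → Z → Prop} {a : F.obj X} {b : F.obj Y} {c : F.obj Z}
    (hr : L.rel r a b) (hs : L.rel s b c) : L.rel (rcomp s r) a c :=
  hL.2.1 X Y Z r s a c ⟨b, hr, hs⟩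

lemma IsLaxExtension.extendsF (hL : L.IsLaxExtension) : L.ExtendsF := by
  rintro X a _ rfl
  have h := hL.rel_graph (fun x : X => x) a
  rw [F.map_ofHom_id_apply] at h
  exact h

lemma IsLaxExtension.natural (hL : L.IsLaxExtension) : L.Natural := by
  intro X X' Y Y' f g r
  funext a c
  refine propext ⟨fun h => ?_, fun ⟨_, ⟨_, ha, hr⟩, hc⟩ => ?_⟩
  · refine ⟨_, ⟨_, rfl, ?_⟩, rfl⟩
    -- `g · g° · r · f · f° ⊆ r`
    have h' := hL.rel_rcomp (hL.rel_rcomp (hL.rel_rconv_graph f a) h) (hL.rel_graph g c)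
    refine hL.1 _ _ _ _ ?_ _ _ h'
    rintro x y ⟨_, ⟨_, rfl, _, ⟨_, rfl, hr⟩, rfl⟩, rfl⟩
    exact hr
  · subst ha hc
    exact hL.rel_rcomp (hL.rel_rcomp (hL.rel_graph f a) hr) (hL.rel_rconv_graph g c)

lemma IsLaxExtension.isConnector (hL : L.IsLaxExtension) : L.IsConnector :=
  ⟨hL.1, hL.natural⟩

end LaxExtension

lemma id_le {L : RelConn F F} (hL : L.IsConnector) (hext : L.ExtendsF) : (id F).le L := by
  intro X Y r b c h
  simpa only [rcomp_diag] using h F L hL X (diag X) b (hext X b b rfl)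

lemma id_mono (F : SetFunctor.{u}) : (id F).Mono := by
  intro X Y r₁ r₂ hsub b c h G L hL Z s a hs
  refine hL.1 _ _ _ _ ?_ _ _ (h G L hL Z s a hs)
  rintro z y ⟨x, hs, hr⟩
  exact ⟨x, hs, hsub x y hr⟩

lemma id_laxL2 (F : SetFunctor.{u}) : (id F).LaxL2 := by
  rintro X Y Z r s b d ⟨c, hr, hs⟩ G L hL W t a ht
  simpa only [rcomp_assoc] using hs G L hL W (rcomp r t) a (hr G L hL W t a ht)

lemma id_laxL3 (F : SetFunctor.{u}) : (id F).LaxL3 := by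
  refine fun X Y f => ⟨?_, ?_⟩
  · rintro b _ rfl G L hL Z s a hs
    -- `s ⊆ f° · f · s`
    rw [← hL.2.rel_rcomp_rconv_graph]
    exact hL.1 _ _ _ _ (fun z x hs => ⟨f x, ⟨x, hs, rfl⟩, rfl⟩) _ _ hs
  · rintro _ b rfl G L hL Z s a hs
    exact (hL.2.rel_rcomp_rconv_graph f s a b).2 hs

lemma id_isLaxExtension (F : SetFunctor.{u}) : (id F).IsLaxExtension :=
  ⟨id_mono F, id_laxL2 F, id_laxL3 F⟩

end RelConn

/-- `F` has a diagonal-preserving lax extension iff the identity relational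
connector `id_F` preserves diagonals, i.e. `id_F Δ_X ⊆ Δ_{FX}` for all sets `X`. -/
theorem diag_preserving_lax_iff_id_diag_preserving (F : SetFunctor.{u}) :
    (∃ L : RelConn F F, L.IsLaxExtension ∧
        ∀ (X : Type u) (a b : F.obj X), L.rel (diag X) a b → diag (F.obj X) a b) ↔
      (∀ (X : Type u) (a b : F.obj X),
        (RelConn.id F).rel (diag X) a b → diag (F.obj X) a b) := by
  constructor
  · rintro ⟨L, hL, hdiag⟩ X a b h
    exact hdiag X a b (RelConn.id_le hL.isConnector hL.extendsF X X (diag X) a b h)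
  · exact fun h => ⟨RelConn.id F, RelConn.id_isLaxExtension F, h⟩
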